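/- Every swap sequence of length at most K that transforms the initial placement of the constructed token swapping instance into its target placement contains at most |A|/2 + n contrary moves in total. -/

import Mathlib

/-!
Give each vertex its signed depth `height` (positive in the ordering gadget, negative in the
slot gadgets) and each token the sign `tokenSign` (`-1` for non-slot tokens). A move changes
`tokenSign t * height` of the moving token by `+1`, or by `-1` exactly when the move is
contrary. Placements stay injective, so a swap moves at most two tokens and the potential
`∑ t, tokenSign t * height (f t)` rises by at most `2 |σ| - 2 C`, where `C` counts the contrary
moves. Every non-item token travels between the ordering gadget and a slot gadget, and the
path through the root shows that its term rises by at least `d_t`; the item tokens only permute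
the root and the nooks, so their part of the potential is unchanged. Hence
`2 C ≤ 2 |σ| - ∑ d_t ≤ |A| + 2 n`.
-/

namespace UnweightedTS

/-- Vertices of the constructed tree: the root, ordering-gadget vertices `ord d`
(distance `d+1` from the root), slot-gadget path vertices `slot i d` (distance `d+1`
from the root in slot gadget `i`), and nooks.  (Coordinates range over all of `ℕ`;
the graph below only has edges between the vertices of the construction, so the
remaining vertices are isolated and carry no tokens.) -/
inductive Vtx (m : ℕ) where
  | root : Vtx m
  | ord : ℕ → Vtx m
  | slot : Fin m → ℕ → Vtx m
  | nook : Fin m → Vtx m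
deriving DecidableEq

/-- Adjacency generator for the tree: `len i` = length of the path of slot gadget `i`,
`lenOrd` = length of the ordering path, `nd` = distance from the root of the path
vertex to which the nook of each slot gadget is attached. -/
def rel {m : ℕ} (len : Fin m → ℕ) (lenOrd nd : ℕ) : Vtx m → Vtx m → Prop
  | .root, .ord d => d = 0 ∧ 0 < lenOrd
  | .ord d, .ord d' => d' = d + 1 ∧ d' < lenOrd
  | .root, .slot i d => d = 0 ∧ 0 < len i
  | .slot i d, .slot i' d' => i = i' ∧ d' = d + 1 ∧ d' < len i
  | .slot i d, .nook i' => i = i' ∧ d + 1 = nd ∧ d < len i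
  | _, _ => False

/-- The constructed tree, as a simple graph. -/
def Tree {m : ℕ} (len : Fin m → ℕ) (lenOrd nd : ℕ) : SimpleGraph (Vtx m) :=
  SimpleGraph.fromRel (rel len lenOrd nd)

/-- Swap the two values `e.1`, `e.2`. -/
def swapV {V : Type*} [DecidableEq V] (e : V × V) (v : V) : V :=
  if v = e.1 then e.2 else if v = e.2 then e.1 else v

/-- Apply a sequence of swaps to a token placement (token ↦ vertex). -/
def applySwaps {T V : Type*} [DecidableEq V] (σ : List (V × V)) (f : T → V) : T → V :=
  σ.foldl (fun g e => fun t => swapV e (g t)) f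

/-- Apply a sequence of star swaps (each given by a leaf) to a placement on the star
with center `none` and leaves `some l`. -/
def starApply {L : Type*} [DecidableEq L] (σ : List L) (f : Option L → Option L) :
    Option L → Option L :=
  σ.foldl (fun g l => fun t => swapV ((none : Option L), some l) (g t)) f

/-- The Star STS instance is a YES instance. -/
def StarSTSYes {L : Type*} [DecidableEq L] (π : Equiv.Perm (Option L)) (σ : List L) : Prop :=
  ∃ σ' : List L, σ'.Sublist σ ∧ starApply σ' id = ⇑π

/-- `k = (mn)^25`, the length of a big segment. -/
def kk (m n : ℕ) : ℕ := (m * n) ^ 25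

/-- `k' = k / n^8`, the length of a padding segment. -/
def kk' (m n : ℕ) : ℕ := kk m n / n ^ 8

variable {m n : ℕ}

/-- `nᵢ`: the number of occurrences of slot `i` in the swap sequence. -/
def cnt (s : Fin n → Fin m) (i : Fin m) : ℕ :=
  (Finset.univ.filter fun j : Fin n => s j = i).card

/-- Length of the ordering path: `nk + nmk'`. -/
def lenOrd (m n : ℕ) : ℕ := n * kk m n + n * m * kk' m n

/-- Length of the path of slot gadget `i`: `nᵢ k + n k'`. -/
def lenSlot (s : Fin n → Fin m) (i : Fin m) : ℕ := cnt s i * kk m n + n * kk' m n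

/-- The non-item tokens: big segments `xⱼ`, `yⱼ` of `k` tokens each, and padding
segments `p_{i,j}`, `q_{i,j}` of `k'` tokens each (in this order of the sum). -/
abbrev NonItem (m n : ℕ) :=
  (Fin n × Fin (kk m n)) ⊕ (Fin n × Fin (kk m n)) ⊕
    (Fin m × Fin n × Fin (kk' m n)) ⊕ (Fin m × Fin n × Fin (kk' m n))

/-- All tokens: item tokens (`Option (Fin m)`, `none` = item 0) and the non-item
tokens. -/
abbrev Tok (m n : ℕ) := Option (Fin m) ⊕ NonItem m n

/-- The constructed tree: ordering path of length `nk + nmk'`, slot path `i` of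
length `nᵢk + nk'`, nooks attached at distance `k` from the root. -/
def TheGraph (s : Fin n → Fin m) : SimpleGraph (Vtx m) :=
  Tree (lenSlot s) (lenOrd m n) (kk m n)

/-- The distance from the root, in slot gadget `i`, at which the block of segment
`q_{i,j}` (preceded by `yⱼ` when `s j = i`) starts in the initial configuration. -/
def offQ (s : Fin n → Fin m) (i : Fin m) (j : Fin n) : ℕ :=
  ∑ j' ∈ Finset.univ.filter (fun j' : Fin n => j'.val < j.val),
    (kk' m n + if s j' = i then kk m n else 0)

/-- The slot occurring next after position `j` in the swap sequence, if any. -/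
def nxt (s : Fin n → Fin m) (j : Fin n) : Option (Fin m) :=
  if h : j.val + 1 < n then some (s ⟨j.val + 1, h⟩) else none

/-- The rank (`0`-based position) of the padding segment `q_{i,j}` among the `m`
padding segments following `yⱼ` in the target configuration of the ordering gadget:
`q_{s_{j+1},j}` first, `q_{s_j,j}` last, and the others in increasing order of `i`. -/
def rho (s : Fin n → Fin m) (i : Fin m) (j : Fin n) : ℕ :=
  if some i = nxt s j then 0
  else if i = s j then m - 1
  else (if (nxt s j).isSome then 1 else 0) +
    (Finset.univ.filter fun i' : Fin m =>
      i'.val < i.val ∧ i' ≠ s j ∧ some i' ≠ nxt s j).card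

/-- The distance from the root, in slot gadget `i`, at which the block of segment
`p_{i,j}` (followed by `xⱼ` when `s j = i`) starts in the target configuration. -/
def tOffP (s : Fin n → Fin m) (i : Fin m) (j : Fin n) : ℕ :=
  ∑ j' ∈ Finset.univ.filter (fun j' : Fin n => j.val < j'.val),
    (kk' m n + if s j' = i then kk m n else 0)

/-- The initial placement of the tokens.  Item `0` is at the root and item `i` at the
nook of slot gadget `i`.  The ordering gadget contains, from the root outward, the
blocks `x₁, p_{·,1}, x₂, p_{·,2}, …, xₙ, p_{·,n}` (the `m` padding blocks after `xⱼ`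
ordered by `rho`); slot gadget `i` contains, from the root outward, the blocks
`q_{i,1},…,q_{i,n}` with `yⱼ` inserted immediately on the root side of `q_{i,j}`
whenever `s j = i`.  Within a segment the coordinate `a` increases away from the root
in slot gadgets and away from the root in the ordering gadget. -/
def initTok (s : Fin n → Fin m) : Tok m n → Vtx m
  | Sum.inl none => .root
  | Sum.inl (some i) => .nook i
  | Sum.inr (Sum.inl (j, a)) => .ord (j.val * (kk m n + m * kk' m n) + a.val)
  | Sum.inr (Sum.inr (Sum.inl (j, a))) => .slot (s j) (offQ s (s j) j + a.val)
  | Sum.inr (Sum.inr (Sum.inr (Sum.inl (i, j, a)))) =>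
      .ord (j.val * (kk m n + m * kk' m n) + kk m n + rho s i j * kk' m n + a.val)
  | Sum.inr (Sum.inr (Sum.inr (Sum.inr (i, j, a)))) =>
      .slot i (offQ s i j + (if s j = i then kk m n else 0) + a.val)

/-- The target placement of the tokens.  Item `o` goes to the position of item `π o`;
the ordering gadget contains, from its far end toward the root, the blocks
`y₁, q_{·,1}, y₂, q_{·,2}, …, yₙ, q_{·,n}` (the `m` padding blocks after `yⱼ` ordered
by `rho`); slot gadget `i` contains, from the root outward, the blocks
`p_{i,n},…,p_{i,1}` with `xⱼ` inserted immediately after (away from the root)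
`p_{i,j}` whenever `s j = i`.  The left-to-right order of the tokens within each
segment is the same as in the initial configuration. -/
def tgtTok (s : Fin n → Fin m) (π : Equiv.Perm (Option (Fin m))) : Tok m n → Vtx m
  | Sum.inl o => (match π o with | none => .root | some i => .nook i)
  | Sum.inr (Sum.inl (j, a)) =>
      .slot (s j) (tOffP s (s j) j + kk' m n + (kk m n - 1 - a.val))
  | Sum.inr (Sum.inr (Sum.inl (j, a))) =>
      .ord (lenOrd m n - 1 - (j.val * (kk m n + m * kk' m n) + a.val))
  | Sum.inr (Sum.inr (Sum.inr (Sum.inl (i, j, a)))) =>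
      .slot i (tOffP s i j + (kk' m n - 1 - a.val))
  | Sum.inr (Sum.inr (Sum.inr (Sum.inr (i, j, a)))) =>
      .ord (lenOrd m n - 1 -
        (j.val * (kk m n + m * kk' m n) + kk m n + rho s i j * kk' m n + a.val))

/-- `d_t`: the tree distance between token `t`'s initial and target vertices. -/
noncomputable def dd (s : Fin n → Fin m) (π : Equiv.Perm (Option (Fin m)))
    (t : Tok m n) : ℕ :=
  (TheGraph s).dist (initTok s t) (tgtTok s π t)

end UnweightedTS

namespace UnweightedTS

variable {m n : ℕ}

/-- The placement after the first `τ` swaps of `σ` (time `τ`). -/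
def placeAt (σ : List (Vtx m × Vtx m)) (f : Tok m n → Vtx m) (τ : ℕ) : Tok m n → Vtx m :=
  applySwaps (σ.take τ) f

/-- `isLeftMove u v` holds when a token moving across an edge from `u` to `v` makes a
*left* move: towards the root within a slot gadget (including out of a nook), or away
from the root within the ordering gadget. -/
def isLeftMove : Vtx m → Vtx m → Bool
  | .root, .ord _ => true
  | .ord _, .root => false
  | .ord d, .ord d' => decide (d < d')
  | .root, .slot _ _ => false
  | .slot _ _, .root => true
  | .slot _ d, .slot _ d' => decide (d' < d)
  | .nook _, .slot _ _ => true
  | .slot _ _, .nook _ => false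
  | _, _ => false

/-- A token of a `y` or `q` segment (initial vertex in a slot gadget). -/
def isSlotTok : Tok m n → Prop
  | Sum.inr (Sum.inr (Sum.inl _)) => True
  | Sum.inr (Sum.inr (Sum.inr (Sum.inr _))) => True
  | _ => False

/-- A token of an `x` or `p` segment (initial vertex in the ordering gadget). -/
def isNonSlotTok : Tok m n → Prop
  | Sum.inr (Sum.inl _) => True
  | Sum.inr (Sum.inr (Sum.inr (Sum.inl _))) => True
  | _ => False

/-- `isContrary t u v` holds when a move of token `t` from `u` to `v` is a *contrary*
move: a right move of a slot token, a right move of an item token, or a left move of a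
non-slot token. -/
def isContrary (t : Tok m n) (u v : Vtx m) : Bool :=
  match t with
  | Sum.inr (Sum.inl _) => isLeftMove u v
  | Sum.inr (Sum.inr (Sum.inr (Sum.inl _))) => isLeftMove u v
  | _ => !isLeftMove u v

/-- `c_t`: the number of contrary moves made by token `t` during the swap sequence
(starting from the placement `f`). -/
def cCount (t : Tok m n) : List (Vtx m × Vtx m) → (Tok m n → Vtx m) → ℕ
  | [], _ => 0
  | e :: rest, f =>
      ((if f t = e.1 ∧ isContrary t e.1 e.2 = true then 1 else 0) +
        (if f t = e.2 ∧ isContrary t e.2 e.1 = true then 1 else 0)) +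
        cCount t rest (fun t' => swapV e (f t'))

/-- Membership of a vertex in a gadget (`none` = the ordering gadget, `some i` = slot
gadget `i`, which includes its nook).  The root belongs to no gadget. -/
def memGadget : Vtx m → Option (Fin m) → Prop
  | .ord _, none => True
  | .slot i _, some i' => i = i'
  | .nook i, some i' => i = i'
  | _, _ => False

/-- The pair of tokens `t₁`, `t₂` is exchanged by the swap at step `idx` of `σ`. -/
def swapsPairAt (σ : List (Vtx m × Vtx m)) (f : Tok m n → Vtx m) (idx : ℕ)
    (t₁ t₂ : Tok m n) : Prop :=
  ∃ h : idx < σ.length,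
    (placeAt σ f idx t₁ = (σ.get ⟨idx, h⟩).1 ∧ placeAt σ f idx t₂ = (σ.get ⟨idx, h⟩).2) ∨
    (placeAt σ f idx t₁ = (σ.get ⟨idx, h⟩).2 ∧ placeAt σ f idx t₂ = (σ.get ⟨idx, h⟩).1)

/-- No pair of tokens swaps with each other more than once during `σ`. -/
def MinimalSeq (σ : List (Vtx m × Vtx m)) (f : Tok m n → Vtx m) : Prop :=
  ∀ (t₁ t₂ : Tok m n) (i₁ i₂ : ℕ), i₁ < i₂ →
    swapsPairAt σ f i₁ t₁ t₂ → ¬ swapsPairAt σ f i₂ t₁ t₂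

/-- The gadget containing a vertex, if any. -/
def gadgetOfV : Vtx m → Option (Fin m)
  | .slot i _ => some i
  | .nook i => some i
  | _ => none

/-- The free item token at time `τ`: the item token that was most recently at the
root (initially item `0`, i.e. `none`). -/
noncomputable def freeAt (σ : List (Vtx m × Vtx m)) (f : Tok m n → Vtx m) :
    ℕ → Option (Fin m)
  | 0 => none
  | τ + 1 =>
      if h : ∃ o : Option (Fin m), placeAt σ f (τ + 1) (Sum.inl o) = Vtx.root then
        h.choose
      else freeAt σ f τ

/-- The exchange sequence `χ` built from the first `τ` steps: each time an item token
that was just in slot gadget `i` becomes the new free item token, `i` is appended. -/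
noncomputable def chiList (σ : List (Vtx m × Vtx m)) (f : Tok m n → Vtx m) :
    ℕ → List (Fin m)
  | 0 => []
  | τ + 1 =>
      chiList σ f τ ++
        (if freeAt σ f (τ + 1) ≠ freeAt σ f τ then
          (match gadgetOfV (placeAt σ f τ (Sum.inl (freeAt σ f (τ + 1)))) with
            | some i => [i]
            | none => [])
        else [])

end UnweightedTS

namespace UnweightedTS

open Finset

variable {m n : ℕ}

def height (nd : ℕ) : Vtx m → ℤ
  | .root => 0
  | .ord d => d + 1
  | .slot _ d => -(d + 1)
  | .nook _ => -(nd + 1)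

def tokenSign : Tok m n → ℤ
  | Sum.inr (Sum.inl _) => -1
  | Sum.inr (Sum.inr (Sum.inr (Sum.inl _))) => -1
  | _ => 1

def potential (nd : ℕ) (f : Tok m n → Vtx m) : ℤ :=
  ∑ t, tokenSign t * height nd (f t)

def contraryAt (t : Tok m n) (e : Vtx m × Vtx m) (v : Vtx m) : ℕ :=
  (if v = e.1 ∧ isContrary t e.1 e.2 = true then 1 else 0) +
    (if v = e.2 ∧ isContrary t e.2 e.1 = true then 1 else 0)

theorem tokenSign_inl (o : Option (Fin m)) : tokenSign (n := n) (.inl o) = 1 :=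
  rfl

theorem swapV_eq_swap {V : Type*} [DecidableEq V] (e : V × V) :
    swapV e = Equiv.swap e.1 e.2 := by
  funext v
  rw [Equiv.swap_apply_def, swapV]

theorem swapV_injective {V : Type*} [DecidableEq V] (e : V × V) : (swapV e).Injective :=
  swapV_eq_swap e ▸ (Equiv.swap e.1 e.2).injective

theorem applySwaps_cons {T V : Type*} [DecidableEq V] (e : V × V) (σ : List (V × V))
    (f : T → V) : applySwaps (e :: σ) f = applySwaps σ (swapV e ∘ f) :=
  rfl

theorem cCount_cons (t : Tok m n) (e : Vtx m × Vtx m) (σ : List (Vtx m × Vtx m))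
    (f : Tok m n → Vtx m) :
    cCount t (e :: σ) f = contraryAt t e (f t) + cCount t σ (swapV e ∘ f) :=
  rfl

section Tree

variable {len : Fin m → ℕ} {lenOrd nd : ℕ}

theorem height_of_adj {u v : Vtx m} (h : (Tree len lenOrd nd).Adj u v) :
    height nd v = height nd u + if isLeftMove u v then 1 else -1 := by
  rw [Tree, SimpleGraph.fromRel_adj] at h
  obtain ⟨-, hrel | hrel⟩ := h <;> cases u <;> cases v <;> simp only [rel] at hrel <;>
    simp only [height, isLeftMove, decide_eq_true_eq, Bool.false_eq_true, if_true, if_false] <;>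
    (try split_ifs) <;> omega

theorem tokenSign_mul_height_sub_of_adj {u v : Vtx m} (h : (Tree len lenOrd nd).Adj u v)
    (t : Tok m n) :
    tokenSign t * (height nd v - height nd u) = 1 - 2 * if isContrary t u v then 1 else 0 := by
  rw [height_of_adj h]
  rcases t with _ | _ | _ | _ | _ <;> cases hl : isLeftMove u v <;>
    simp [tokenSign, isContrary, hl]

theorem tokenSign_mul_height_swapV {e : Vtx m × Vtx m} (he : (Tree len lenOrd nd).Adj e.1 e.2)
    (t : Tok m n) (v : Vtx m) :
    tokenSign t * height nd (swapV e v) + 2 * contraryAt t e v =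
      tokenSign t * height nd v + if v = e.1 ∨ v = e.2 then 1 else 0 := by
  obtain ⟨a, b⟩ := e
  have hab : a ≠ b := he.ne
  have forward := tokenSign_mul_height_sub_of_adj he t
  have backward := tokenSign_mul_height_sub_of_adj he.symm t
  by_cases ha : v = a
  · subst ha
    have hc : (contraryAt t (v, b) v : ℤ) = if isContrary t v b then 1 else 0 := by
      simp [contraryAt, hab]
    simp only [swapV, if_true, true_or] at forward ⊢
    push_cast [hc]
    linarith
  · by_cases hb : v = b
    · subst hb
      have hc : (contraryAt t (a, v) v : ℤ) = if isContrary t v a then 1 else 0 := by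
        simp [contraryAt, ha]
      simp only [swapV, ha, if_true, if_false, or_true] at backward ⊢
      push_cast [hc]
      linarith
    · simp [swapV, contraryAt, ha, hb]

theorem potential_swapV_add_le {e : Vtx m × Vtx m} (he : (Tree len lenOrd nd).Adj e.1 e.2)
    {f : Tok m n → Vtx m} (hf : f.Injective) :
    potential nd (swapV e ∘ f) + 2 * ∑ t, (contraryAt t e (f t) : ℤ) ≤
      potential nd f + 2 := by
  have endpoints : ∑ t, (if f t = e.1 ∨ f t = e.2 then 1 else 0 : ℤ) ≤ 2 := by
    have hcard : #{t | f t = e.1 ∨ f t = e.2} ≤ #{e.1, e.2} :=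
      card_le_card_of_injOn f (by intro t; simp) hf.injOn
    have := card_le_two (a := e.1) (b := e.2)
    rw [sum_boole]
    omega
  have hsum := sum_congr rfl fun t (_ : t ∈ univ) => tokenSign_mul_height_swapV he t (f t)
  simp only [sum_add_distrib, ← mul_sum] at hsum
  simp only [potential, Function.comp_apply]
  linarith

theorem potential_applySwaps_add_le (σ : List (Vtx m × Vtx m))
    (hσ : ∀ e ∈ σ, (Tree len lenOrd nd).Adj e.1 e.2) {f : Tok m n → Vtx m}
    (hf : f.Injective) :
    potential nd (applySwaps σ f) + 2 * ∑ t, (cCount t σ f : ℤ) ≤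
      potential nd f + 2 * σ.length := by
  induction σ generalizing f with
  | nil => simp [applySwaps, cCount]
  | cons e σ ih =>
    have hstep := potential_swapV_add_le (hσ e List.mem_cons_self) hf
    have hrest := ih (fun e' he' => hσ e' (List.mem_cons_of_mem e he'))
      ((swapV_injective e).comp hf)
    simp only [applySwaps_cons, cCount_cons, Nat.cast_add, sum_add_distrib,
      List.length_cons] at hrest ⊢
    push_cast
    linarith

theorem Tree.adj_of_rel {u v : Vtx m} (h : rel len lenOrd nd u v) (hne : u ≠ v) :
    (Tree len lenOrd nd).Adj u v :=
  (SimpleGraph.fromRel_adj _ _ _).2 ⟨hne, .inl h⟩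

theorem Tree.exists_walk_root_ord {d : ℕ} (hd : d < lenOrd) :
    ∃ w : (Tree len lenOrd nd).Walk .root (.ord d), w.length = d + 1 := by
  induction d with
  | zero => exact ⟨.cons (Tree.adj_of_rel (v := .ord 0) ⟨rfl, hd⟩ (by simp)) .nil, rfl⟩
  | succ d ih =>
    obtain ⟨w, hw⟩ := ih (by omega)
    exact ⟨w.concat (Tree.adj_of_rel (u := .ord d) ⟨rfl, hd⟩ (by simp)), by simp [hw]⟩

theorem Tree.exists_walk_root_slot {i : Fin m} {d : ℕ} (hd : d < len i) :
    ∃ w : (Tree len lenOrd nd).Walk .root (.slot i d), w.length = d + 1 := by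
  induction d with
  | zero => exact ⟨.cons (Tree.adj_of_rel (v := .slot i 0) ⟨rfl, hd⟩ (by simp)) .nil, rfl⟩
  | succ d ih =>
    obtain ⟨w, hw⟩ := ih (by omega)
    exact ⟨w.concat (Tree.adj_of_rel (u := .slot i d) ⟨rfl, rfl, hd⟩ (by simp)),
      by simp [hw]⟩

theorem Tree.dist_slot_ord_le {i : Fin m} {d d' : ℕ} (hd : d < len i) (hd' : d' < lenOrd) :
    ((Tree len lenOrd nd).dist (.slot i d) (.ord d') : ℤ) ≤
      height nd (.ord d' : Vtx m) - height nd (.slot i d) := by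
  obtain ⟨w, hw⟩ := Tree.exists_walk_root_slot (lenOrd := lenOrd) (nd := nd) hd
  obtain ⟨w', hw'⟩ := Tree.exists_walk_root_ord (len := len) (nd := nd) hd'
  have := SimpleGraph.dist_le (w.reverse.append w')
  simp only [SimpleGraph.Walk.length_append, SimpleGraph.Walk.length_reverse, hw, hw'] at this
  simp only [height]
  omega

end Tree

section Rank

variable {α β : Type*} [Fintype α] [LinearOrder β] (g : α → β)

theorem card_filter_lt_lt_card_filter_lt {a b : α} (h : g a < g b) :
    #{x | g x < g a} < #{x | g x < g b} :=
  card_lt_card <| (ssubset_iff_of_subset (monotone_filter_right _ fun _ _ hx => lt_trans hx h)).2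
    ⟨a, by simp [h], by simp⟩

theorem card_filter_lt_lt_card (a : α) : #{x | g x < g a} < Fintype.card α :=
  card_lt_univ_of_notMem (x := a) (by simp)

theorem card_filter_lt_injective (hg : g.Injective) :
    Function.Injective fun a => #{x | g x < g a} := by
  intro a b h
  by_contra hab
  rcases lt_or_gt_of_ne (hg.ne hab) with hlt | hlt
  · exact (card_filter_lt_lt_card_filter_lt g hlt).ne h
  · exact (card_filter_lt_lt_card_filter_lt g hlt).ne' h

end Rank

-- `rho` is the rank for this key, which makes it injective with values below `m`.
def rhoKey (s : Fin n → Fin m) (j : Fin n) (i : Fin m) : ℕ ×ₗ ℕ :=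
  toLex (if some i = nxt s j then 0 else if i = s j then 2 else 1, i.val)

theorem rhoKey_injective (s : Fin n → Fin m) (j : Fin n) : (rhoKey s j).Injective :=
  fun _ _ h => Fin.ext (congrArg (·.2) (toLex.injective h))

theorem card_filter_some_eq (o : Option (Fin m)) :
    #{i : Fin m | some i = o} = if o.isSome then 1 else 0 := by
  cases o <;> simp [filter_eq']

theorem rho_eq_card_filter_rhoKey_lt (s : Fin n → Fin m) (i : Fin m) (j : Fin n) :
    rho s i j = #{i' | rhoKey s j i' < rhoKey s j i} := by
  simp only [rho, rhoKey, Prod.Lex.toLex_lt_toLex]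
  by_cases hi : some i = nxt s j
  · simp only [if_pos hi]
    refine (card_eq_zero.2 (filter_eq_empty_iff.2 fun i' _ => ?_)).symm
    by_cases hi' : some i' = nxt s j
    · rw [← hi', Option.some_inj] at hi; simp [hi]
    · split_ifs <;> simp
  by_cases hs : i = s j
  · simp only [if_neg hi, if_pos hs]
    subst hs
    have : #(univ.erase (s j)) = m - 1 := by simp
    rw [← this]
    congr 1
    ext x
    simp only [mem_filter, mem_univ, true_and, mem_erase, and_true]
    split_ifs with hx
    · simp only [Nat.ofNat_pos, true_or, iff_true]
      rintro rfl
      exact hi hx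
    all_goals simp_all
  · simp only [if_neg hi, if_neg hs]
    rw [← card_filter_some_eq, ← card_union_of_disjoint, ← filter_or]
    · congr 1
      ext x
      simp only [mem_filter, mem_univ, true_and]
      split_ifs <;> simp_all
    · exact disjoint_filter.2 fun x _ h h' => h'.2.2 h

theorem rho_lt (s : Fin n → Fin m) (i : Fin m) (j : Fin n) : rho s i j < m := by
  simpa [rho_eq_card_filter_rhoKey_lt] using card_filter_lt_lt_card (rhoKey s j) i

theorem rho_injective (s : Fin n → Fin m) (j : Fin n) :
    Function.Injective fun i => rho s i j := by
  simpa only [rho_eq_card_filter_rhoKey_lt] using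
    card_filter_lt_injective (rhoKey s j) (rhoKey_injective s j)

theorem eq_and_eq_of_add_eq_add_of_separated {ι : Type*} [LinearOrder ι] {start len : ι → ℕ}
    (hsep : ∀ ⦃j j'⦄, j < j' → start j + len j ≤ start j') {j j' : ι} {a a' : ℕ}
    (ha : a < len j) (ha' : a' < len j') (h : start j + a = start j' + a') :
    j = j' ∧ a = a' := by
  rcases lt_trichotomy j j' with hlt | rfl | hlt
  · have := hsep hlt; omega
  · exact ⟨rfl, by omega⟩
  · have := hsep hlt; omega

theorem eq_and_eq_of_mul_add_eq_mul_add {B j j' a a' : ℕ} (ha : a < B) (ha' : a' < B)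
    (h : j * B + a = j' * B + a') : j = j' ∧ a = a' :=
  eq_and_eq_of_add_eq_add_of_separated (len := fun _ => B)
    (fun j j' hlt => by rw [← Nat.succ_mul]; exact Nat.mul_le_mul_right B hlt) ha ha' h

theorem mul_add_lt_lenOrd (j : Fin n) {b : ℕ} (hb : b < kk m n + m * kk' m n) :
    j.val * (kk m n + m * kk' m n) + b < lenOrd m n := by
  have := Nat.add_mul_lt_mul_of_lt_of_lt hb j.isLt
  rw [lenOrd]
  linarith

theorem kk_add_rho_mul_add_lt (s : Fin n → Fin m) (i : Fin m) (j : Fin n) (a : Fin (kk' m n)) :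
    kk m n + (rho s i j * kk' m n + a) < kk m n + m * kk' m n := by
  have := Nat.add_mul_lt_mul_of_lt_of_lt a.isLt (rho_lt s i j)
  linarith

theorem offQ_add_le_offQ (s : Fin n → Fin m) (i : Fin m) {j j' : Fin n} (h : j < j') :
    offQ s i j + ((if s j = i then kk m n else 0) + kk' m n) ≤ offQ s i j' := by
  have hsub : insert j (univ.filter fun x : Fin n => x.val < j.val) ⊆
      univ.filter fun x : Fin n => x.val < j'.val := by
    intro x
    simp only [mem_insert, mem_filter, mem_univ, true_and, Fin.ext_iff]
    omega
  have := sum_le_sum_of_subset (f := fun x => kk' m n + if s x = i then kk m n else 0) hsub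
  rw [sum_insert (by simp)] at this
  rw [offQ, offQ]
  omega

theorem offQ_add_add_tOffP (s : Fin n → Fin m) (i : Fin m) (j : Fin n) :
    offQ s i j + ((if s j = i then kk m n else 0) + kk' m n) + tOffP s i j = lenSlot s i := by
  have hsplit : (univ.filter fun x : Fin n => ¬ x.val < j.val) =
      insert j (univ.filter fun x : Fin n => j.val < x.val) := by
    ext x
    simp only [mem_filter, mem_univ, true_and, mem_insert, Fin.ext_iff]
    omega
  have htotal : ∑ x : Fin n, (kk' m n + if s x = i then kk m n else 0) = lenSlot s i := by
    rw [sum_add_distrib, sum_const, card_univ, Fintype.card_fin, ← sum_filter, sum_const,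
      smul_eq_mul, smul_eq_mul, lenSlot, cnt, add_comm]
  rw [← htotal, ← sum_filter_add_sum_filter_not univ (fun x : Fin n => x.val < j.val), hsplit,
    sum_insert (by simp), offQ, tOffP]
  ring

theorem eq_and_eq_of_offQ_add_eq (s : Fin n → Fin m) (i : Fin m) {j j' : Fin n} {a a' : ℕ}
    (ha : a < (if s j = i then kk m n else 0) + kk' m n)
    (ha' : a' < (if s j' = i then kk m n else 0) + kk' m n)
    (h : offQ s i j + a = offQ s i j' + a') : j = j' ∧ a = a' :=
  eq_and_eq_of_add_eq_add_of_separated (fun _ _ => offQ_add_le_offQ s i) ha ha' h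

theorem initTok_injective (s : Fin n → Fin m) : (initTok s).Injective := by
  have hx (a : Fin (kk m n)) : a.val < kk m n + m * kk' m n := by omega
  have hp := kk_add_rho_mul_add_lt s
  intro t t' h
  rcases t with (_ | i) | ⟨j, a⟩ | ⟨j, a⟩ | ⟨i, j, a⟩ | ⟨i, j, a⟩ <;>
  rcases t' with (_ | i') | ⟨j', a'⟩ | ⟨j', a'⟩ | ⟨i', j', a'⟩ | ⟨i', j', a'⟩ <;>
  simp only [initTok, Vtx.ord.injEq, Vtx.slot.injEq, Vtx.nook.injEq, reduceCtorEq, Sum.inl.injEq,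
    Sum.inr.injEq, Option.some.injEq, Prod.mk.injEq, add_assoc] at h ⊢
  · exact h
  · obtain ⟨hj, ha⟩ := eq_and_eq_of_mul_add_eq_mul_add (hx a) (hx a') h
    exact ⟨Fin.ext hj, Fin.ext ha⟩
  · have := (eq_and_eq_of_mul_add_eq_mul_add (hx a) (hp i' j' a') h).2; omega
  · obtain ⟨hi, h⟩ := h
    rw [← hi] at h
    obtain ⟨rfl, ha⟩ := eq_and_eq_of_offQ_add_eq s (s j) (by rw [if_pos rfl]; omega)
      (by rw [if_pos hi.symm]; omega) h
    exact ⟨rfl, Fin.ext ha⟩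
  · obtain ⟨rfl, h⟩ := h
    obtain ⟨rfl, ha⟩ := eq_and_eq_of_offQ_add_eq s (s j) (by rw [if_pos rfl]; omega)
      (by split_ifs <;> omega) h
    rw [if_pos rfl] at ha
    omega
  · have := (eq_and_eq_of_mul_add_eq_mul_add (hp i j a) (hx a') h).2; omega
  · obtain ⟨hj, hr⟩ := eq_and_eq_of_mul_add_eq_mul_add (hp i j a) (hp i' j' a') h
    obtain ⟨rfl⟩ := Fin.ext hj
    obtain ⟨hi, ha⟩ := eq_and_eq_of_mul_add_eq_mul_add (j := rho s i j) (j' := rho s i' j)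
      a.isLt a'.isLt (by omega)
    exact ⟨rho_injective s j hi, rfl, Fin.ext ha⟩
  · obtain ⟨rfl, h⟩ := h
    obtain ⟨rfl, ha⟩ := eq_and_eq_of_offQ_add_eq s (s j') (by split_ifs <;> omega)
      (by rw [if_pos rfl]; omega) h
    rw [if_pos rfl] at ha
    omega
  · obtain ⟨rfl, h⟩ := h
    obtain ⟨rfl, ha⟩ :=
      eq_and_eq_of_offQ_add_eq s i (by split_ifs <;> omega) (by split_ifs <;> omega) h
    exact ⟨rfl, rfl, Fin.ext (by omega)⟩

theorem TheGraph.dist_slot_ord_le (s : Fin n → Fin m) {i : Fin m} {d d' : ℕ}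
    (hd : d < lenSlot s i) (hd' : d' < lenOrd m n) :
    ((TheGraph s).dist (.slot i d) (.ord d') : ℤ) ≤
      height (kk m n) (.ord d' : Vtx m) - height (kk m n) (.slot i d) :=
  Tree.dist_slot_ord_le hd hd'

theorem dd_le_tokenSign_mul_height_sub (s : Fin n → Fin m) (π : Equiv.Perm (Option (Fin m)))
    (t : NonItem m n) :
    (dd s π (.inr t) : ℤ) ≤ tokenSign (.inr t) *
      (height (kk m n) (tgtTok s π (.inr t)) - height (kk m n) (initTok s (.inr t))) := by
  have hx (a : Fin (kk m n)) : a.val < kk m n + m * kk' m n := by omega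
  have hslot := offQ_add_add_tOffP s
  rcases t with ⟨j, a⟩ | ⟨j, a⟩ | ⟨i, j, a⟩ | ⟨i, j, a⟩ <;>
    simp only [dd, initTok, tgtTok, tokenSign]
  · have := mul_add_lt_lenOrd j (hx a)
    have := hslot (s j) j
    rw [if_pos rfl] at this
    rw [SimpleGraph.dist_comm]
    exact (TheGraph.dist_slot_ord_le s (by omega) (by omega)).trans_eq (by ring)
  · have := mul_add_lt_lenOrd j (hx a)
    have := hslot (s j) j
    rw [if_pos rfl] at this
    exact (TheGraph.dist_slot_ord_le s (by omega) (by omega)).trans_eq (by ring)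
  · have := hslot i j
    have := mul_add_lt_lenOrd j (kk_add_rho_mul_add_lt s i j a)
    rw [SimpleGraph.dist_comm]
    exact (TheGraph.dist_slot_ord_le s (by omega) (by omega)).trans_eq (by ring)
  · have := hslot i j
    have := mul_add_lt_lenOrd j (kk_add_rho_mul_add_lt s i j a)
    exact (TheGraph.dist_slot_ord_le s (by omega) (by omega)).trans_eq (by ring)

theorem tgtTok_inl (s : Fin n → Fin m) (π : Equiv.Perm (Option (Fin m))) (o : Option (Fin m)) :
    tgtTok s π (.inl o) = initTok s (.inl (π o)) := by
  simp only [tgtTok]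
  cases π o <;> rfl

theorem sum_dd_le_potential_sub (s : Fin n → Fin m) (π : Equiv.Perm (Option (Fin m))) :
    ∑ t : NonItem m n, (dd s π (.inr t) : ℤ) ≤
      potential (kk m n) (tgtTok s π) - potential (kk m n) (initTok s) := by
  have hitems := Equiv.sum_comp π fun o => height (kk m n) (initTok s (.inl o))
  have hnonitems := sum_le_sum fun t (_ : t ∈ univ) =>
    (dd_le_tokenSign_mul_height_sub s π t).trans_eq (mul_sub _ _ _)
  rw [sum_sub_distrib] at hnonitems
  rw [potential, potential, Fintype.sum_sum_type (α₁ := Option (Fin m)),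
    Fintype.sum_sum_type (α₁ := Option (Fin m))]
  simp only [tokenSign_inl, one_mul, tgtTok_inl, hitems]
  linarith

theorem contrary_moves_bound_general {m n : ℕ}
    (s : Fin n → Fin m) (π : Equiv.Perm (Option (Fin m)))
    (σ : List (Vtx m × Vtx m))
    (hedges : ∀ e ∈ σ, (TheGraph s).Adj e.1 e.2)
    (hsol : applySwaps σ (initTok s) = tgtTok s π)
    (hlen : 2 * σ.length ≤ (∑ t : NonItem m n, (dd s π (Sum.inr t) + 1)) + 2 * n) :
    2 * (∑ t : Tok m n, cCount t σ (initTok s)) ≤ Fintype.card (NonItem m n) + 2 * n := by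
  have hpot := potential_applySwaps_add_le σ hedges (initTok_injective s)
  rw [hsol] at hpot
  have hgain := sum_dd_le_potential_sub s π
  simp only [sum_add_distrib, sum_const, card_univ, smul_eq_mul, mul_one] at hlen
  zify at hlen ⊢
  linarith

theorem contrary_moves_bound {m n : ℕ}
    (s : Fin n → Fin m) (π : Equiv.Perm (Option (Fin m)))
    (hπ0 : π none = none)
    (hocc : ∀ i : Fin m, ∃ j, s j = i)
    (hcons : ∀ (j : Fin n) (h : j.val + 1 < n), s j ≠ s ⟨j.val + 1, h⟩)
    (σ : List (Vtx m × Vtx m))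
    (hedges : ∀ e ∈ σ, (TheGraph s).Adj e.1 e.2)
    (hsol : applySwaps σ (initTok s) = tgtTok s π)
    (hlen : 2 * σ.length ≤ (∑ t : NonItem m n, (dd s π (Sum.inr t) + 1)) + 2 * n) :
    2 * (∑ t : Tok m n, cCount t σ (initTok s)) ≤ Fintype.card (NonItem m n) + 2 * n :=
  contrary_moves_bound_general s π σ hedges hsol hlen

end UnweightedTS
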